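/- arXiv:1210.1258 — 8 statements merged into one kernel-verified Lean document; each statement's English description precedes it below -/
import Mathlib

section
/- If M and N are real n×k matrices each of full column rank k, then their Khatri-Rao product M ⊙ N (an n²×k matrix) also has full column rank k. -/
/-- Khatri-Rao product: `(M ⊙ N) ((i,j), h) = M j h * N i h`. -/
def khatriRao {n k : ℕ} (M N : Matrix (Fin n) (Fin k) ℝ) :
    Matrix (Fin n × Fin n) (Fin k) ℝ :=
  Matrix.of fun ij h => M ij.2 h * N ij.1 h

lemma rank_eq_iff_ker {m : Type*} [Fintype m] {k : ℕ} (A : Matrix m (Fin k) ℝ) :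
    A.rank = k ↔ ∀ x, A.mulVec x = 0 → x = 0 := by
  have hrn := LinearMap.finrank_range_add_finrank_ker A.mulVecLin
  rw [Matrix.rank]
  have hdom : Module.finrank ℝ (Fin k → ℝ) = k := by simp
  rw [hdom] at hrn
  constructor
  · intro h x hx
    have hker : Module.finrank ℝ (LinearMap.ker A.mulVecLin) = 0 := by omega
    have : LinearMap.ker A.mulVecLin = ⊥ := Submodule.finrank_eq_zero.mp hker
    have := LinearMap.ker_eq_bot.mp this
    exact this (by simpa [Matrix.mulVecLin_apply] using hx)
  · intro h
    have : LinearMap.ker A.mulVecLin = ⊥ := by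
      rw [LinearMap.ker_eq_bot']
      intro x hx
      exact h x (by simpa [Matrix.mulVecLin_apply] using hx)
    rw [this] at hrn
    simpa using hrn

/-- The Khatri-Rao product of two full column rank matrices has full column rank. -/
theorem khatriRao_full_column_rank (n k : ℕ) (M N : Matrix (Fin n) (Fin k) ℝ)
    (hM : M.rank = k) (hN : N.rank = k) : (khatriRao M N).rank = k := by
  rw [rank_eq_iff_ker] at hM hN ⊢
  intro x hx
  have key : ∀ j h, M j h * x h = 0 := by
    intro j h
    have hNj : N.mulVec (fun h => M j h * x h) = 0 := by
      funext i
      have := congrFun hx (i, j)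
      simpa [khatriRao, Matrix.mulVec, dotProduct, Finset.mul_sum, Finset.sum_mul, mul_assoc, mul_comm, mul_left_comm]
        using this
    exact congrFun (hN _ hNj) h
  funext h
  have hMh : M.mulVec (Pi.single h (x h)) = 0 := by
    funext j
    have : M.mulVec (Pi.single h (x h)) j = M j h * x h := by
      simp [Matrix.mulVec_single]
    rw [this, key j h]
    rfl
  have := congrFun (hM _ hMh) h
  simpa using this
end

section
/- If each of the matrices P1, P2, P3, P4 has full column rank k, then the rank of the unfolding A equals the rank of P_HG: rank(A) = rank(P_HG). -/
open Matrix

private lemma inj_of_rank {n k : ℕ} (P : Matrix (Fin n) (Fin k) ℝ) (h : P.rank = k) :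
    Function.Injective P.mulVecLin := by
  rw [← LinearMap.ker_eq_bot]
  have h2 := LinearMap.finrank_range_add_finrank_ker P.mulVecLin
  rw [Matrix.rank] at h
  rw [h, Module.finrank_fin_fun] at h2
  have : Module.finrank ℝ (LinearMap.ker P.mulVecLin) = 0 := by omega
  exact Submodule.finrank_eq_zero.mp this

private lemma kr_inj {n k : ℕ} (P Q : Matrix (Fin n) (Fin k) ℝ)
    (hP : Function.Injective P.mulVecLin) (hQ : Function.Injective Q.mulVecLin) :
    Function.Injective
      (Matrix.of (fun (x : Fin n × Fin n) h => P x.1 h * Q x.2 h)).mulVecLin := by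
  rw [← LinearMap.ker_eq_bot, LinearMap.ker_eq_bot']
  intro v hv
  have key : ∀ (x2 : Fin n) (h : Fin k), Q x2 h * v h = 0 := by
    intro x2
    have hw : P.mulVecLin (fun h => Q x2 h * v h) = 0 := by
      funext x1
      have := congrFun hv (x1, x2)
      simpa [Matrix.mulVecLin_apply, Matrix.mulVec, dotProduct, mul_assoc,
        mul_comm, mul_left_comm] using this
    have := hP (by rw [hw, map_zero] : P.mulVecLin (fun h => Q x2 h * v h) = P.mulVecLin 0)
    exact fun h => congrFun this h
  funext h
  have hu : Q.mulVecLin (Pi.single h (v h)) = 0 := by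
    funext x2
    simp [Matrix.mulVecLin_apply, Matrix.mulVec, dotProduct,
      Pi.single_apply, Finset.sum_ite_eq']
    have := mul_eq_zero.mp (key x2 h)
    tauto
  have := hQ (by rw [hu, map_zero] : Q.mulVecLin (Pi.single h (v h)) = Q.mulVecLin 0)
  have := congrFun this h
  simpa using this

private lemma rank_mul_left {m p q : Type*} [Fintype m] [Fintype p] [Fintype q]
    [DecidableEq p] [DecidableEq q]
    (M : Matrix m p ℝ) (X : Matrix p q ℝ) (hM : Function.Injective M.mulVecLin) :
    (M * X).rank = X.rank := by
  rw [Matrix.rank, Matrix.rank, Matrix.mulVecLin_mul, LinearMap.range_comp]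
  exact (LinearEquiv.finrank_eq
    (Submodule.equivMapOfInjective M.mulVecLin hM (LinearMap.range X.mulVecLin))).symm

private lemma rank_mul_right {m p q : Type*} [Fintype m] [Fintype p] [Fintype q]
    [DecidableEq p] [DecidableEq q]
    (X : Matrix m p ℝ) (T : Matrix p q ℝ)
    (hT : LinearMap.range T.mulVecLin = ⊤) :
    (X * T).rank = X.rank := by
  rw [Matrix.rank, Matrix.rank, Matrix.mulVecLin_mul,
    LinearMap.range_comp_of_range_eq_top _ hT]


/-- If `P1, P2, P3, P4` have full column rank `k`, then the unfolding `A` has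
the same rank as `P_HG`. -/
theorem rank_unfolding_A (n k : ℕ) (hn : 0 < n) (hk : 0 < k)
    (P1 P2 P3 P4 : Matrix (Fin n) (Fin k) ℝ) (PHG : Matrix (Fin k) (Fin k) ℝ)
    (h1 : P1.rank = k) (h2 : P2.rank = k) (h3 : P3.rank = k) (h4 : P4.rank = k)
    (A : Matrix (Fin n × Fin n) (Fin n × Fin n) ℝ)
    (hA : ∀ x1 x2 x3 x4, A (x1, x2) (x3, x4) =
      ∑ h, ∑ g, P1 x1 h * P2 x2 h * PHG h g * P3 x3 g * P4 x4 g) :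
    A.rank = PHG.rank := by
  set M : Matrix (Fin n × Fin n) (Fin k) ℝ :=
    Matrix.of (fun x h => P1 x.1 h * P2 x.2 h) with hM
  set N : Matrix (Fin n × Fin n) (Fin k) ℝ :=
    Matrix.of (fun x g => P3 x.1 g * P4 x.2 g) with hN
  have hAeq : A = M * (PHG * Nᵀ) := by
    ext ⟨x1, x2⟩ ⟨x3, x4⟩
    rw [hA]
    simp only [Matrix.mul_apply, hM, hN, Matrix.of_apply, Matrix.transpose_apply,
      Finset.mul_sum, Finset.sum_mul]
    refine Finset.sum_congr rfl fun h _ => Finset.sum_congr rfl fun g _ => by ring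
  have hMinj : Function.Injective M.mulVecLin :=
    kr_inj P1 P2 (inj_of_rank P1 h1) (inj_of_rank P2 h2)
  have hNinj : Function.Injective N.mulVecLin :=
    kr_inj P3 P4 (inj_of_rank P3 h3) (inj_of_rank P4 h4)
  have hNrank : N.rank = k := by
    rw [Matrix.rank]
    have h2' := LinearMap.finrank_range_add_finrank_ker N.mulVecLin
    rw [LinearMap.ker_eq_bot.mpr hNinj, finrank_bot, Module.finrank_fin_fun] at h2'
    omega
  have hNTsurj : LinearMap.range Nᵀ.mulVecLin = ⊤ := by
    apply Submodule.eq_top_of_finrank_eq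
    have : Nᵀ.rank = k := by rw [Matrix.rank_transpose]; exact hNrank
    rw [Matrix.rank] at this
    rw [this, Module.finrank_fin_fun]
  rw [hAeq, rank_mul_left M _ hMinj, rank_mul_right PHG Nᵀ hNTsurj]
end

section
/- If each of the matrices P1, P2, P3, P4 has full column rank k, then the ranks of the unfoldings B and C both equal the number of nonzero entries of P_HG: rank(B) = rank(C) = nnz(P_HG). -/
open Matrix Kronecker

/-- A square matrix of full rank has unit determinant. -/
lemma aux_isUnit_det_of_rank_eq_card {m : Type*} [Fintype m] [DecidableEq m]
    (A : Matrix m m ℝ) (h : A.rank = Fintype.card m) : IsUnit A.det := by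
  rw [← Matrix.isUnit_iff_isUnit_det, ← Matrix.mulVec_surjective_iff_isUnit]
  have htop : LinearMap.range A.mulVecLin = ⊤ := by
    apply Submodule.eq_top_of_finrank_eq
    rw [← Matrix.rank, h]
    simp [Module.finrank_fintype_fun_eq_card]
  intro v
  obtain ⟨w, hw⟩ := LinearMap.range_eq_top.mp htop v
  exact ⟨w, hw⟩

/-- Multiplying on the left by a full-column-rank matrix preserves rank. -/
lemma aux_rank_mul_left {m' m o : Type*} [Fintype m'] [Fintype m] [Fintype o] [DecidableEq m]
    (L : Matrix m' m ℝ) (M : Matrix m o ℝ) (h : IsUnit (Lᵀ * L).det) :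
    (L * M).rank = M.rank := by
  refine le_antisymm (Matrix.rank_mul_le_right _ _) ?_
  have key : ((Lᵀ * L)⁻¹ * Lᵀ) * (L * M) = M := by
    rw [Matrix.mul_assoc, ← Matrix.mul_assoc Lᵀ L M, ← Matrix.mul_assoc,
      Matrix.nonsing_inv_mul _ h, Matrix.one_mul]
  calc M.rank = (((Lᵀ * L)⁻¹ * Lᵀ) * (L * M)).rank := by rw [key]
    _ ≤ (L * M).rank := Matrix.rank_mul_le_right _ _

/-- Multiplying on the right by the transpose of a full-column-rank matrix preserves rank. -/
lemma aux_rank_mul_right {m' m o : Type*} [Fintype m'] [Fintype m] [Fintype o] [DecidableEq m]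
    (R : Matrix m' m ℝ) (M : Matrix o m ℝ) (h : IsUnit (Rᵀ * R).det) :
    (M * Rᵀ).rank = M.rank := by
  refine le_antisymm (Matrix.rank_mul_le_left _ _) ?_
  have key : (M * Rᵀ) * (R * (Rᵀ * R)⁻¹) = M := by
    rw [Matrix.mul_assoc, ← Matrix.mul_assoc Rᵀ R _, ← Matrix.mul_assoc,
      Matrix.mul_assoc M _ _, Matrix.mul_nonsing_inv _ h, Matrix.mul_one]
  calc M.rank = ((M * Rᵀ) * (R * (Rᵀ * R)⁻¹)).rank := by rw [key]
    _ ≤ (M * Rᵀ).rank := Matrix.rank_mul_le_left _ _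

lemma aux_isUnit_kron {n k : ℕ} (Q1 Q3 : Matrix (Fin n) (Fin k) ℝ)
    (h1 : Q1.rank = k) (h3 : Q3.rank = k) :
    IsUnit (((Q1 ⊗ₖ Q3)ᵀ * (Q1 ⊗ₖ Q3)).det) := by
  have hT : (Q1 ⊗ₖ Q3)ᵀ = Q1ᵀ ⊗ₖ Q3ᵀ := by
    ext ⟨a, b⟩ ⟨c, d⟩; simp [Matrix.kroneckerMap_apply]
  rw [hT, ← Matrix.mul_kronecker_mul, Matrix.det_kronecker]
  have u1 : IsUnit (Q1ᵀ * Q1).det :=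
    aux_isUnit_det_of_rank_eq_card _ (by rw [Matrix.rank_transpose_mul_self, h1]; simp)
  have u3 : IsUnit (Q3ᵀ * Q3).det :=
    aux_isUnit_det_of_rank_eq_card _ (by rw [Matrix.rank_transpose_mul_self, h3]; simp)
  exact (u1.pow _).mul (u3.pow _)

/-- Key lemma: an unfolding of the given form has rank `nnz PHG`. -/
lemma aux_key {n k : ℕ} (Q1 Q2 Q3 Q4 : Matrix (Fin n) (Fin k) ℝ)
    (PHG : Matrix (Fin k) (Fin k) ℝ)
    (h1 : Q1.rank = k) (h2 : Q2.rank = k) (h3 : Q3.rank = k) (h4 : Q4.rank = k)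
    (M : Matrix (Fin n × Fin n) (Fin n × Fin n) ℝ)
    (hM : ∀ x1 x2 x3 x4, M (x1, x3) (x2, x4) =
      ∑ h, ∑ g, Q1 x1 h * Q2 x2 h * PHG h g * Q3 x3 g * Q4 x4 g) :
    M.rank = (Finset.univ.filter fun hg : Fin k × Fin k => PHG hg.1 hg.2 ≠ 0).card := by
  set L : Matrix (Fin n × Fin n) (Fin k × Fin k) ℝ := Q1 ⊗ₖ Q3 with hL
  set R : Matrix (Fin n × Fin n) (Fin k × Fin k) ℝ := Q2 ⊗ₖ Q4 with hR
  set D : Matrix (Fin k × Fin k) (Fin k × Fin k) ℝ :=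
    Matrix.diagonal (fun p : Fin k × Fin k => PHG p.1 p.2) with hD
  have hDR : D * Rᵀ =
      Matrix.of (fun (p : Fin k × Fin k) (q : Fin n × Fin n) =>
        PHG p.1 p.2 * (Q2 q.1 p.1 * Q4 q.2 p.2)) := by
    ext ⟨h, g⟩ ⟨x2, x4⟩
    simp [hD, hR, Matrix.diagonal_mul, Matrix.kroneckerMap_apply]
  have hfact : M = L * (D * Rᵀ) := by
    ext ⟨x1, x3⟩ ⟨x2, x4⟩
    rw [hM x1 x2 x3 x4, hDR]
    simp only [Matrix.mul_apply, Matrix.of_apply, hL, Matrix.kroneckerMap_apply,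
      Fintype.sum_prod_type]
    exact Finset.sum_congr rfl fun h _ => Finset.sum_congr rfl fun g _ => by ring
  have hrank : M.rank =
      (Matrix.diagonal (fun p : Fin k × Fin k => PHG p.1 p.2)).rank := by
    rw [hfact, aux_rank_mul_left L _ (aux_isUnit_kron Q1 Q3 h1 h3),
      aux_rank_mul_right R _ (aux_isUnit_kron Q2 Q4 h2 h4)]
  rw [hrank, Matrix.rank_diagonal, Fintype.card_subtype]

/-- If `P1, P2, P3, P4` have full column rank `k`, then the unfoldings `B` and `C` both have
rank equal to the number of nonzero entries of `P_HG`. -/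
theorem rank_unfolding_B_C (n k : ℕ) (hn : 0 < n) (hk : 0 < k)
    (P1 P2 P3 P4 : Matrix (Fin n) (Fin k) ℝ) (PHG : Matrix (Fin k) (Fin k) ℝ)
    (h1 : P1.rank = k) (h2 : P2.rank = k) (h3 : P3.rank = k) (h4 : P4.rank = k)
    (B C : Matrix (Fin n × Fin n) (Fin n × Fin n) ℝ)
    (hB : ∀ x1 x2 x3 x4, B (x1, x3) (x2, x4) =
      ∑ h, ∑ g, P1 x1 h * P2 x2 h * PHG h g * P3 x3 g * P4 x4 g)
    (hC : ∀ x1 x2 x3 x4, C (x1, x4) (x2, x3) =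
      ∑ h, ∑ g, P1 x1 h * P2 x2 h * PHG h g * P3 x3 g * P4 x4 g) :
    B.rank = (Finset.univ.filter fun hg : Fin k × Fin k => PHG hg.1 hg.2 ≠ 0).card ∧
    C.rank = (Finset.univ.filter fun hg : Fin k × Fin k => PHG hg.1 hg.2 ≠ 0).card := by
  constructor
  · exact aux_key P1 P2 P3 P4 PHG h1 h2 h3 h4 B hB
  · refine aux_key P1 P2 P4 P3 PHG h1 h2 h4 h3 C ?_
    intro x1 x2 x3 x4
    rw [hC x1 x2 x4 x3]
    refine Finset.sum_congr rfl fun h _ => Finset.sum_congr rfl fun g _ => by ring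
end

section
/- If each of the matrices P1, P2, P3, P4 has full column rank k, then rank(A) ≤ rank(B) = rank(C). Moreover, the inequality rank(A) < rank(B) is strict unless every row and every column of P_HG contains at most one nonzero entry (i.e., unless the relationship between the hidden variables is deterministic). -/
/-!
With the Khatri–Rao factors `(P1 ⊙ P2)` and `(P3 ⊙ P4)` one has `A = (P1 ⊙ P2) PHG (P3 ⊙ P4)ᵀ`,
so `rank A ≤ rank PHG`. The other two unfoldings are `B = (P1 ⊗ P3) D (P2 ⊗ P4)ᵀ` and
`C = (P1 ⊗ P4) D (P2 ⊗ P3)ᵀ` with `D` the diagonal matrix carrying the entries of `PHG`. A matrix of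
full column rank has a left inverse, hence so does a Kronecker product of two of them, and the
outer factors do not change the rank: `rank B = rank C = rank D` is the number of nonzero entries
of `PHG`. That number bounds `rank PHG` through the number of nonzero rows, strictly as soon as
some row (or, after transposing, some column) has two nonzero entries.
-/

open Finset
open scoped Kronecker

namespace Matrix

variable {K : Type*} [Field K]

section EntrySupport

variable {m n : Type*} [Fintype m] [Fintype n] [DecidableEq K] (M : Matrix m n K)

def entrySupport : Finset (m × n) :=
  univ.filter fun q => M q.1 q.2 ≠ 0

@[simp]
lemma mem_entrySupport {q : m × n} : q ∈ M.entrySupport ↔ M q.1 q.2 ≠ 0 := by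
  simp only [entrySupport, mem_filter, mem_univ, true_and]

lemma card_entrySupport_transpose : Mᵀ.entrySupport.card = M.entrySupport.card :=
  card_bij' (fun q _ => q.swap) (fun q _ => q.swap) (by simp) (by simp) (fun _ _ => rfl)
    (fun _ _ => rfl)

lemma rank_le_card_image_fst_entrySupport [DecidableEq m] :
    M.rank ≤ (M.entrySupport.image Prod.fst).card := by
  refine M.rank_le_card_of_support_subset _ fun i hi => ?_
  obtain ⟨j, hj⟩ := Function.ne_iff.mp hi
  exact mem_image.mpr ⟨(i, j), by simpa using hj, rfl⟩

lemma rank_le_card_entrySupport : M.rank ≤ M.entrySupport.card := by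
  classical
  exact (rank_le_card_image_fst_entrySupport M).trans card_image_le

lemma rank_lt_card_entrySupport_of_row {i : m} {j j' : n} (hjj' : j ≠ j')
    (hj : M i j ≠ 0) (hj' : M i j' ≠ 0) : M.rank < M.entrySupport.card := by
  classical
  refine (rank_le_card_image_fst_entrySupport M).trans_lt (card_image_le.lt_of_ne fun h => ?_)
  have := card_image_iff.mp h (by simpa using hj : (i, j) ∈ _) (by simpa using hj' : (i, j') ∈ _)
  exact hjj' (congrArg Prod.snd (this rfl))

lemma rank_lt_card_entrySupport
    (h : ¬((∀ i j j', M i j ≠ 0 → M i j' ≠ 0 → j = j') ∧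
      (∀ j i i', M i j ≠ 0 → M i' j ≠ 0 → i = i'))) :
    M.rank < M.entrySupport.card := by
  simp only [not_and_or, not_forall, exists_prop] at h
  rcases h with ⟨i, j, j', hj, hj', hjj'⟩ | ⟨j, i, i', hi, hi', hii'⟩
  · exact rank_lt_card_entrySupport_of_row M hjj' hj hj'
  · simpa [rank_transpose, card_entrySupport_transpose] using
      rank_lt_card_entrySupport_of_row Mᵀ hii' hi hi'

lemma rank_diagonal_eq_card_entrySupport [DecidableEq m] [DecidableEq n] :
    (diagonal fun q : m × n => M q.1 q.2).rank = M.entrySupport.card := by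
  rw [rank_diagonal, Fintype.card_subtype]
  rfl

end EntrySupport

section LeftInverse

variable {l m n o : Type*} [Fintype m] [Fintype n]

lemma exists_mul_eq_one_of_rank_eq_card_width [DecidableEq m] [DecidableEq n]
    (P : Matrix m n K) (h : P.rank = Fintype.card n) : ∃ L : Matrix n m K, L * P = 1 := by
  have hker : LinearMap.ker P.mulVecLin = ⊥ := by
    have := LinearMap.finrank_range_add_finrank_ker P.mulVecLin
    rw [Module.finrank_fintype_fun_eq_card, ← rank, h, add_eq_left] at this
    exact Submodule.finrank_eq_zero.mp this
  obtain ⟨g, hg⟩ := P.mulVecLin.exists_leftInverse_of_injective hker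
  refine ⟨LinearMap.toMatrix' g, ?_⟩
  rw [← LinearMap.toMatrix'_toLin' P, ← LinearMap.toMatrix'_comp, toLin'_apply', hg,
    LinearMap.toMatrix'_id]

lemma rank_mul_eq_right_of_mul_eq_one [Fintype o] [DecidableEq n] {L : Matrix n m K}
    {P : Matrix m n K} (hLP : L * P = 1) (X : Matrix n o K) : (P * X).rank = X.rank :=
  le_antisymm (rank_mul_le_right P X) <| by
    simpa [← Matrix.mul_assoc, hLP] using rank_mul_le_right L (P * X)

lemma rank_mul_eq_left_of_mul_eq_one [DecidableEq m] {Q : Matrix m n K} {R : Matrix n m K}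
    (hQR : Q * R = 1) (X : Matrix o m K) : (X * Q).rank = X.rank :=
  le_antisymm (rank_mul_le_left X Q) <| by
    simpa [Matrix.mul_assoc, hQR] using rank_mul_le_left (X * Q) R

lemma rank_mul_mul_transpose_of_mul_eq_one [Fintype l] [Fintype o] [DecidableEq m]
    [DecidableEq o] {L : Matrix m l K} {E : Matrix l m K} {L' : Matrix o n K}
    {F : Matrix n o K} (hE : L * E = 1) (hF : L' * F = 1) (D : Matrix m o K) :
    (E * D * Fᵀ).rank = D.rank := by
  have hF' : Fᵀ * L'ᵀ = 1 := by rw [← transpose_mul, hF, transpose_one]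
  rw [rank_mul_eq_left_of_mul_eq_one hF', rank_mul_eq_right_of_mul_eq_one hE]

lemma kronecker_mul_kronecker_eq_one [DecidableEq l] [DecidableEq o] {L : Matrix l m K}
    {P : Matrix m l K} {L' : Matrix o n K} {Q : Matrix n o K} (hP : L * P = 1)
    (hQ : L' * Q = 1) : L ⊗ₖ L' * P ⊗ₖ Q = 1 := by
  rw [← mul_kronecker_mul, hP, hQ, one_kronecker_one]

end LeftInverse

section Unfolding

variable {m₁ m₂ m₃ m₄ k l R : Type*} [Fintype k] [Fintype l] [CommSemiring R]
  (U : Matrix m₁ k R) (V : Matrix m₂ k R) (W : Matrix m₃ l R) (Y : Matrix m₄ l R)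
  (M : Matrix k l R)

lemma eq_mul_mul_transpose_of_eq_sum (X : Matrix (m₁ × m₂) (m₃ × m₄) R)
    (hX : ∀ a b c d, X (a, b) (c, d) = ∑ h, ∑ g, U a h * V b h * M h g * W c g * Y d g) :
    X = (of fun p h => U p.1 h * V p.2 h) * M * (of fun q g => W q.1 g * Y q.2 g)ᵀ := by
  ext ⟨a, b⟩ ⟨c, d⟩
  simp only [hX, mul_apply, sum_mul, of_apply, transpose_apply]
  exact sum_comm.trans (sum_congr rfl fun _ _ => sum_congr rfl fun _ _ => by ring)

lemma eq_kronecker_mul_diagonal_mul_kronecker_transpose_of_eq_sum [DecidableEq k]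
    [DecidableEq l] (X : Matrix (m₁ × m₃) (m₂ × m₄) R)
    (hX : ∀ a b c d, X (a, c) (b, d) = ∑ h, ∑ g, U a h * V b h * M h g * W c g * Y d g) :
    X = U ⊗ₖ W * diagonal (fun q : k × l => M q.1 q.2) * (V ⊗ₖ Y)ᵀ := by
  ext ⟨a, c⟩ ⟨b, d⟩
  rw [hX, mul_apply, Fintype.sum_prod_type]
  simp only [mul_diagonal, transpose_apply, kronecker_apply]
  exact sum_congr rfl fun _ _ => sum_congr rfl fun _ _ => by ring

end Unfolding

lemma rank_eq_card_entrySupport_of_eq_sum {m₁ m₂ m₃ m₄ k l : Type*} [Fintype m₁] [Fintype m₂]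
    [Fintype m₃] [Fintype m₄] [Fintype k] [Fintype l] [DecidableEq k] [DecidableEq l]
    [DecidableEq K] {U : Matrix m₁ k K} {V : Matrix m₂ k K} {W : Matrix m₃ l K}
    {Y : Matrix m₄ l K} {LU : Matrix k m₁ K} {LV : Matrix k m₂ K} {LW : Matrix l m₃ K}
    {LY : Matrix l m₄ K} (hU : LU * U = 1) (hV : LV * V = 1) (hW : LW * W = 1)
    (hY : LY * Y = 1) (M : Matrix k l K) (X : Matrix (m₁ × m₃) (m₂ × m₄) K)
    (hX : ∀ a b c d, X (a, c) (b, d) = ∑ h, ∑ g, U a h * V b h * M h g * W c g * Y d g) :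
    X.rank = M.entrySupport.card := by
  rw [eq_kronecker_mul_diagonal_mul_kronecker_transpose_of_eq_sum U V W Y M X hX,
    rank_mul_mul_transpose_of_mul_eq_one (kronecker_mul_kronecker_eq_one hU hW)
      (kronecker_mul_kronecker_eq_one hV hY), rank_diagonal_eq_card_entrySupport]

end Matrix

open Matrix

theorem rank_A_le_rank_B_eq_rank_C_general (n k : ℕ)
    (P1 P2 P3 P4 : Matrix (Fin n) (Fin k) ℝ) (PHG : Matrix (Fin k) (Fin k) ℝ)
    (h1 : P1.rank = k) (h2 : P2.rank = k) (h3 : P3.rank = k) (h4 : P4.rank = k)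
    (A B C : Matrix (Fin n × Fin n) (Fin n × Fin n) ℝ)
    (hA : ∀ x1 x2 x3 x4, A (x1, x2) (x3, x4) =
      ∑ h, ∑ g, P1 x1 h * P2 x2 h * PHG h g * P3 x3 g * P4 x4 g)
    (hB : ∀ x1 x2 x3 x4, B (x1, x3) (x2, x4) =
      ∑ h, ∑ g, P1 x1 h * P2 x2 h * PHG h g * P3 x3 g * P4 x4 g)
    (hC : ∀ x1 x2 x3 x4, C (x1, x4) (x2, x3) =
      ∑ h, ∑ g, P1 x1 h * P2 x2 h * PHG h g * P3 x3 g * P4 x4 g) :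
    A.rank ≤ B.rank ∧ B.rank = C.rank ∧
      (¬ ((∀ h g g', PHG h g ≠ 0 → PHG h g' ≠ 0 → g = g') ∧
          (∀ g h h', PHG h g ≠ 0 → PHG h' g ≠ 0 → h = h')) → A.rank < B.rank) := by
  have left_inv (P : Matrix (Fin n) (Fin k) ℝ) (hP : P.rank = k) :
      ∃ L : Matrix (Fin k) (Fin n) ℝ, L * P = 1 :=
    exists_mul_eq_one_of_rank_eq_card_width P (by rwa [Fintype.card_fin])
  obtain ⟨L1, hL1⟩ := left_inv P1 h1
  obtain ⟨L2, hL2⟩ := left_inv P2 h2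
  obtain ⟨L3, hL3⟩ := left_inv P3 h3
  obtain ⟨L4, hL4⟩ := left_inv P4 h4
  have hA_le : A.rank ≤ PHG.rank := by
    rw [eq_mul_mul_transpose_of_eq_sum P1 P2 P3 P4 PHG A hA]
    exact (rank_mul_le_left _ _).trans (rank_mul_le_right _ _)
  have hB_eq : B.rank = PHG.entrySupport.card :=
    rank_eq_card_entrySupport_of_eq_sum hL1 hL2 hL3 hL4 PHG B hB
  have hC_eq : C.rank = PHG.entrySupport.card :=
    rank_eq_card_entrySupport_of_eq_sum hL1 hL2 hL4 hL3 PHG C fun a b c d =>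
      (hC a b d c).trans <| sum_congr rfl fun _ _ => sum_congr rfl fun _ _ => mul_right_comm _ _ _
  exact ⟨hB_eq ▸ hA_le.trans (rank_le_card_entrySupport PHG), hB_eq.trans hC_eq.symm,
    fun h => hB_eq ▸ hA_le.trans_lt (rank_lt_card_entrySupport PHG h)⟩

/-- If `P1, P2, P3, P4` have full column rank `k`, then `rank A ≤ rank B = rank C`, and the
inequality `rank A < rank B` is strict unless every row and every column of `P_HG` contains at
most one nonzero entry. -/
theorem rank_A_le_rank_B_eq_rank_C (n k : ℕ) (hn : 0 < n) (hk : 0 < k)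
    (P1 P2 P3 P4 : Matrix (Fin n) (Fin k) ℝ) (PHG : Matrix (Fin k) (Fin k) ℝ)
    (h1 : P1.rank = k) (h2 : P2.rank = k) (h3 : P3.rank = k) (h4 : P4.rank = k)
    (A B C : Matrix (Fin n × Fin n) (Fin n × Fin n) ℝ)
    (hA : ∀ x1 x2 x3 x4, A (x1, x2) (x3, x4) =
      ∑ h, ∑ g, P1 x1 h * P2 x2 h * PHG h g * P3 x3 g * P4 x4 g)
    (hB : ∀ x1 x2 x3 x4, B (x1, x3) (x2, x4) =
      ∑ h, ∑ g, P1 x1 h * P2 x2 h * PHG h g * P3 x3 g * P4 x4 g)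
    (hC : ∀ x1 x2 x3 x4, C (x1, x4) (x2, x3) =
      ∑ h, ∑ g, P1 x1 h * P2 x2 h * PHG h g * P3 x3 g * P4 x4 g) :
    A.rank ≤ B.rank ∧ B.rank = C.rank ∧
      (¬ ((∀ h g g', PHG h g ≠ 0 → PHG h g' ≠ 0 → g = g') ∧
          (∀ g h h', PHG h g ≠ 0 → PHG h' g ≠ 0 → h = h')) → A.rank < B.rank) :=
  rank_A_le_rank_B_eq_rank_C_general n k P1 P2 P3 P4 PHG h1 h2 h3 h4 A B C hA hB hC
end

section
/- Suppose the hidden variables are independent, i.e., P_HG = p qᵀ for vectors p, q ∈ ℝ^k. Then the nuclear norm quartet test succeeds: ‖A‖* ≤ ‖B‖* and ‖A‖* ≤ ‖C‖*. (Indeed ‖A‖* = ‖A‖_F = ‖B‖_F ≤ ‖B‖*, since A has rank at most 1 and A, B, C consist of the same entries.) -/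
/-!
With `P_HG = p qᵀ` the unfolding `A` is an outer product, so it has rank at most one and its
nuclear norm is at most its Frobenius norm. `B` and `C` consist of the same entries as `A`, so they
have the same Frobenius norm, and the Frobenius norm `√(∑ σᵢ²)` of any matrix is at most its
nuclear norm `∑ σᵢ`.
-/

/-- The nuclear norm of a real matrix: the sum of its singular values, i.e. the sum of the
square roots of the eigenvalues of `Mᴴ * M`. -/
noncomputable def nuclearNorm {α β : Type*} [Fintype α] [Fintype β] [DecidableEq β]
    (M : Matrix α β ℝ) : ℝ :=
  ∑ i, Real.sqrt ((Matrix.isHermitian_conjTranspose_mul_self M).eigenvalues i)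

namespace Matrix

variable {α β : Type*} [Fintype α] [Fintype β]

theorem sum_sq_eq_of_reindex {ι κ : Type*} [Fintype ι] [Fintype κ] {M : Matrix α β ℝ}
    {N : Matrix ι κ ℝ} (e : α × β ≃ ι × κ) (h : ∀ i j, N (e (i, j)).1 (e (i, j)).2 = M i j) :
    ∑ i, ∑ j, M i j ^ 2 = ∑ i, ∑ j, N i j ^ 2 := by
  simp only [← Fintype.sum_prod_type', ← e.sum_comp (fun x => N x.1 x.2 ^ 2), h]

variable [DecidableEq β]

theorem sum_eigenvalues_conjTranspose_mul_self (M : Matrix α β ℝ) :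
    ∑ i, (isHermitian_conjTranspose_mul_self M).eigenvalues i = ∑ i, ∑ j, M i j ^ 2 := by
  have := (isHermitian_conjTranspose_mul_self M).trace_eq_sum_eigenvalues
  simp only [RCLike.ofReal_real_eq_id, id] at this
  rw [← this, Finset.sum_comm]
  simp [trace, mul_apply, sq]

theorem sqrt_sum_sq_le_nuclearNorm (M : Matrix α β ℝ) :
    √(∑ i, ∑ j, M i j ^ 2) ≤ nuclearNorm M := by
  have heig := eigenvalues_conjTranspose_mul_self_nonneg M
  rw [← sum_eigenvalues_conjTranspose_mul_self,
    Real.sqrt_le_left (by unfold nuclearNorm; positivity)]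
  calc ∑ i, (isHermitian_conjTranspose_mul_self M).eigenvalues i
      = ∑ i, √((isHermitian_conjTranspose_mul_self M).eigenvalues i) ^ 2 := by
        simp only [Real.sq_sqrt (heig _)]
    _ ≤ nuclearNorm M ^ 2 := Finset.sum_sq_le_sq_sum_of_nonneg fun _ _ => Real.sqrt_nonneg _

/-- Cauchy–Schwarz against the indicator of the nonzero singular values. -/
theorem nuclearNorm_le_sqrt_rank_mul_sqrt_sum_sq (M : Matrix α β ℝ) :
    nuclearNorm M ≤ √M.rank * √(∑ i, ∑ j, M i j ^ 2) := by
  set e := (isHermitian_conjTranspose_mul_self M).eigenvalues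
  have hrank : (M.rank : ℝ) = ∑ i, if e i ≠ 0 then 1 else 0 := by
    rw [← rank_conjTranspose_mul_self,
      (isHermitian_conjTranspose_mul_self M).rank_eq_card_non_zero_eigs,
      Finset.sum_boole, Fintype.card_subtype]
  rw [hrank, ← sum_eigenvalues_conjTranspose_mul_self]
  refine le_of_eq_of_le (Finset.sum_congr rfl fun i _ => ?_) (Real.sum_sqrt_mul_sqrt_le _
    (fun i => by positivity) (eigenvalues_conjTranspose_mul_self_nonneg M))
  by_cases hi : e i = 0 <;> simp_all [e]

theorem nuclearNorm_le_sqrt_sum_sq_of_rank_le_one {M : Matrix α β ℝ} (hM : M.rank ≤ 1) :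
    nuclearNorm M ≤ √(∑ i, ∑ j, M i j ^ 2) := by
  refine (nuclearNorm_le_sqrt_rank_mul_sqrt_sum_sq M).trans
    (mul_le_of_le_one_left (Real.sqrt_nonneg _) ?_)
  exact Real.sqrt_le_one.mpr (by exact_mod_cast hM)

theorem nuclearNorm_le_of_rank_le_one_of_reindex {ι κ : Type*} [Fintype ι] [Fintype κ]
    [DecidableEq κ] {M : Matrix α β ℝ} {N : Matrix ι κ ℝ} (hM : M.rank ≤ 1) (e : α × β ≃ ι × κ)
    (h : ∀ i j, N (e (i, j)).1 (e (i, j)).2 = M i j) :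
    nuclearNorm M ≤ nuclearNorm N :=
  calc nuclearNorm M ≤ √(∑ i, ∑ j, M i j ^ 2) := nuclearNorm_le_sqrt_sum_sq_of_rank_le_one hM
    _ = √(∑ i, ∑ j, N i j ^ 2) := by rw [sum_sq_eq_of_reindex e h]
    _ ≤ nuclearNorm N := sqrt_sum_sq_le_nuclearNorm N

end Matrix

theorem nuclear_norm_test_independent_general (n k : ℕ)
    (P1 P2 P3 P4 : Matrix (Fin n) (Fin k) ℝ) (p q : Fin k → ℝ)
    (PHG : Matrix (Fin k) (Fin k) ℝ) (hPHG : PHG = Matrix.vecMulVec p q)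
    (A B C : Matrix (Fin n × Fin n) (Fin n × Fin n) ℝ)
    (hA : ∀ x1 x2 x3 x4, A (x1, x2) (x3, x4) =
      ∑ h, ∑ g, P1 x1 h * P2 x2 h * PHG h g * P3 x3 g * P4 x4 g)
    (hB : ∀ x1 x2 x3 x4, B (x1, x3) (x2, x4) =
      ∑ h, ∑ g, P1 x1 h * P2 x2 h * PHG h g * P3 x3 g * P4 x4 g)
    (hC : ∀ x1 x2 x3 x4, C (x1, x4) (x2, x3) =
      ∑ h, ∑ g, P1 x1 h * P2 x2 h * PHG h g * P3 x3 g * P4 x4 g) :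
    nuclearNorm A ≤ nuclearNorm B ∧ nuclearNorm A ≤ nuclearNorm C := by
  have hA_rank : A.rank ≤ 1 := by
    have hA_outer : A = Matrix.vecMulVec (fun x => ∑ h, P1 x.1 h * P2 x.2 h * p h)
        (fun y => ∑ g, q g * P3 y.1 g * P4 y.2 g) := by
      ext ⟨x1, x2⟩ ⟨x3, x4⟩
      simp only [hA, hPHG, Matrix.vecMulVec_apply, Finset.sum_mul_sum]
      exact Finset.sum_congr rfl fun h _ => Finset.sum_congr rfl fun g _ => by ring
    exact hA_outer ▸ Matrix.rank_vecMulVec_le _ _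
  constructor
  · exact Matrix.nuclearNorm_le_of_rank_le_one_of_reindex hA_rank (Equiv.prodProdProdComm _ _ _ _)
      fun ⟨x1, x2⟩ ⟨x3, x4⟩ => (hB x1 x2 x3 x4).trans (hA x1 x2 x3 x4).symm
  · exact Matrix.nuclearNorm_le_of_rank_le_one_of_reindex hA_rank
      { toFun := fun ⟨⟨x1, x2⟩, ⟨x3, x4⟩⟩ => ((x1, x4), (x2, x3))
        invFun := fun ⟨⟨x1, x4⟩, ⟨x2, x3⟩⟩ => ((x1, x2), (x3, x4))
        left_inv := fun _ => rfl
        right_inv := fun _ => rfl }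
      fun ⟨x1, x2⟩ ⟨x3, x4⟩ => (hC x1 x2 x3 x4).trans (hA x1 x2 x3 x4).symm

/-- When the hidden variables are independent (`P_HG = p qᵀ`), the nuclear norm quartet test
succeeds: `‖A‖* ≤ ‖B‖*` and `‖A‖* ≤ ‖C‖*`. -/
theorem nuclear_norm_test_independent (n k : ℕ) (hn : 0 < n) (hk : 0 < k)
    (P1 P2 P3 P4 : Matrix (Fin n) (Fin k) ℝ) (p q : Fin k → ℝ)
    (PHG : Matrix (Fin k) (Fin k) ℝ) (hPHG : PHG = Matrix.vecMulVec p q)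
    (A B C : Matrix (Fin n × Fin n) (Fin n × Fin n) ℝ)
    (hA : ∀ x1 x2 x3 x4, A (x1, x2) (x3, x4) =
      ∑ h, ∑ g, P1 x1 h * P2 x2 h * PHG h g * P3 x3 g * P4 x4 g)
    (hB : ∀ x1 x2 x3 x4, B (x1, x3) (x2, x4) =
      ∑ h, ∑ g, P1 x1 h * P2 x2 h * PHG h g * P3 x3 g * P4 x4 g)
    (hC : ∀ x1 x2 x3 x4, C (x1, x4) (x2, x3) =
      ∑ h, ∑ g, P1 x1 h * P2 x2 h * PHG h g * P3 x3 g * P4 x4 g) :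
    nuclearNorm A ≤ nuclearNorm B ∧ nuclearNorm A ≤ nuclearNorm C :=
  nuclear_norm_test_independent_general n k P1 P2 P3 P4 p q PHG hPHG A B C hA hB hC
end

section
/- Suppose P1, P2, P3, P4 are column-stochastic. Let p, q ∈ ℝ^k and let Δ be a real k×k matrix. Let B_⊥ and C_⊥ denote the unfoldings B and C built from middle matrix p qᵀ, and B, C those built from middle matrix p qᵀ + Δ (with the same P1, P2, P3, P4). Then | ‖B‖* − ‖B_⊥‖* | ≤ k² · ‖Δ‖_F and | ‖C‖* − ‖C_⊥‖* | ≤ k² · ‖Δ‖_F. -/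
/-- The Frobenius norm of a real matrix. -/
noncomputable def frobeniusNorm {α β : Type*} [Fintype α] [Fintype β] (M : Matrix α β ℝ) : ℝ :=
  Real.sqrt (∑ i, ∑ j, (M i j) ^ 2)

/-- A matrix is column-stochastic if its entries are nonnegative and each column sums to 1. -/
def colStochastic {α β : Type*} [Fintype α] (M : Matrix α β ℝ) : Prop :=
  (∀ i j, 0 ≤ M i j) ∧ ∀ j, ∑ i, M i j = 1

/-- The unfolding `B` built from middle matrix `Mmid`:
`B ((x1,x3),(x2,x4)) = Σ_{h,g} P1(x1,h) P2(x2,h) Mmid(h,g) P3(x3,g) P4(x4,g)`. -/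
def unfoldB {n k : ℕ} (P1 P2 P3 P4 : Matrix (Fin n) (Fin k) ℝ)
    (Mmid : Matrix (Fin k) (Fin k) ℝ) : Matrix (Fin n × Fin n) (Fin n × Fin n) ℝ :=
  Matrix.of fun r c => ∑ h, ∑ g, P1 r.1 h * P2 c.1 h * Mmid h g * P3 r.2 g * P4 c.2 g

/-- The unfolding `C` built from middle matrix `Mmid`:
`C ((x1,x4),(x2,x3)) = Σ_{h,g} P1(x1,h) P2(x2,h) Mmid(h,g) P3(x3,g) P4(x4,g)`. -/
def unfoldC {n k : ℕ} (P1 P2 P3 P4 : Matrix (Fin n) (Fin k) ℝ)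
    (Mmid : Matrix (Fin k) (Fin k) ℝ) : Matrix (Fin n × Fin n) (Fin n × Fin n) ℝ :=
  Matrix.of fun r c => ∑ h, ∑ g, P1 r.1 h * P2 c.1 h * Mmid h g * P3 c.2 g * P4 r.2 g

/-!
The nuclear norm is a norm, so `| ‖B‖* − ‖B_⊥‖* | ≤ ‖B − B_⊥‖*`, and `B − B_⊥` is the unfolding
built from `Δ` alone. The triangle inequality comes from duality: `tr (Xᵀ A) ≤ ‖A‖*` for every
contraction `X` (expand the trace in the right singular basis of `A` and apply Cauchy–Schwarz),
with equality for the polar factor `X = U Vᵀ` of `A`.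

The unfolding built from `Δ` factors as `(P1 ⊗ P3) · diag(vec Δ) · (P2 ⊗ P4)ᵀ`, so its rank is at
most `k²` and, by Cauchy–Schwarz over the nonzero singular values, its nuclear norm is at most `k`
times its Frobenius norm. Kronecker products of column-stochastic matrices are column-stochastic,
hence have columns of Euclidean norm at most `1`, which bounds that Frobenius norm by `k ‖Δ‖_F`.
The unfolding `C` is `B` with `P3` and `P4` exchanged.
-/

open Matrix Finset

theorem dotProduct_le_sqrt_mul_sqrt {β : Type*} [Fintype β] (u w : β → ℝ) :
    u ⬝ᵥ w ≤ √(u ⬝ᵥ u) * √(w ⬝ᵥ w) := by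
  simpa [dotProduct, sq] using Real.sum_mul_le_sqrt_mul_sqrt univ u w

theorem frobeniusNorm_nonneg {α β : Type*} [Fintype α] [Fintype β] (M : Matrix α β ℝ) :
    0 ≤ frobeniusNorm M :=
  Real.sqrt_nonneg _

section NuclearNorm

variable {α β : Type*} [Fintype α] [Fintype β] [DecidableEq β]

noncomputable def singularValue (M : Matrix α β ℝ) (i : β) : ℝ :=
  √((isHermitian_conjTranspose_mul_self M).eigenvalues i)

noncomputable def rightSingularVector (M : Matrix α β ℝ) (i : β) : β → ℝ :=
  (isHermitian_conjTranspose_mul_self M).eigenvectorBasis i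

theorem nuclearNorm_eq_sum_singularValue (M : Matrix α β ℝ) :
    nuclearNorm M = ∑ i, singularValue M i := rfl

theorem singularValue_nonneg (M : Matrix α β ℝ) (i : β) : 0 ≤ singularValue M i :=
  Real.sqrt_nonneg _

theorem sq_singularValue (M : Matrix α β ℝ) (i : β) :
    singularValue M i ^ 2 = (isHermitian_conjTranspose_mul_self M).eigenvalues i :=
  Real.sq_sqrt ((posSemidef_conjTranspose_mul_self M).eigenvalues_nonneg i)

theorem rightSingularVector_dotProduct (M : Matrix α β ℝ) (i j : β) :
    rightSingularVector M i ⬝ᵥ rightSingularVector M j = if i = j then 1 else 0 := by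
  have h := orthonormal_iff_ite.mp
    (isHermitian_conjTranspose_mul_self M).eigenvectorBasis.orthonormal j i
  simpa [EuclideanSpace.inner_eq_star_dotProduct, @eq_comm _ j i, rightSingularVector] using h

theorem sum_rightSingularVector_mul (M : Matrix α β ℝ) (x y : β) :
    ∑ i, rightSingularVector M i x * rightSingularVector M i y = if x = y then 1 else 0 := by
  have h := (isHermitian_conjTranspose_mul_self M).eigenvectorBasis.sum_inner_mul_inner
    (EuclideanSpace.single x 1) (EuclideanSpace.single y 1)
  simpa [EuclideanSpace.inner_single_left, EuclideanSpace.inner_single_right,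
    rightSingularVector, @eq_comm _ y x] using h

theorem sum_sq_rightSingularVector_dotProduct (M : Matrix α β ℝ) (w : β → ℝ) :
    ∑ i, (rightSingularVector M i ⬝ᵥ w) ^ 2 = w ⬝ᵥ w := by
  have h := OrthonormalBasis.sum_sq_inner_left (E := EuclideanSpace ℝ β)
    (isHermitian_conjTranspose_mul_self M).eigenvectorBasis
    (WithLp.toLp 2 w : EuclideanSpace ℝ β)
  rw [EuclideanSpace.real_norm_sq_eq] at h
  simpa [EuclideanSpace.inner_eq_star_dotProduct, dotProduct, rightSingularVector,
    dotProduct_comm, sq] using h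

theorem mulVec_rightSingularVector_dotProduct (M : Matrix α β ℝ) (i j : β) :
    (M *ᵥ rightSingularVector M i) ⬝ᵥ (M *ᵥ rightSingularVector M j) =
      if i = j then singularValue M i ^ 2 else 0 := by
  rw [← vecMul_transpose, ← dotProduct_mulVec, mulVec_mulVec,
    ← conjTranspose_eq_transpose_of_trivial, rightSingularVector, rightSingularVector,
    (isHermitian_conjTranspose_mul_self M).mulVec_eigenvectorBasis, dotProduct_smul,
    ← rightSingularVector, ← rightSingularVector, rightSingularVector_dotProduct,
    sq_singularValue]
  split_ifs with h <;> simp [h]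

theorem trace_transpose_mul_eq_sum_dotProduct {γ : Type*} [Fintype γ] (M : Matrix α β ℝ)
    (X A : Matrix γ β ℝ) :
    (Xᵀ * A).trace =
      ∑ i, (X *ᵥ rightSingularVector M i) ⬝ᵥ (A *ᵥ rightSingularVector M i) := by
  set V : Matrix β β ℝ := (of (rightSingularVector M))ᵀ
  have hV : V * Vᵀ = 1 := by
    ext x y
    simp [V, mul_apply, sum_rightSingularVector_mul, one_apply]
  calc (Xᵀ * A).trace = ((X * V)ᵀ * (A * V)).trace := by
        rw [transpose_mul, Matrix.mul_assoc, trace_mul_comm Vᵀ, Matrix.mul_assoc,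
          Matrix.mul_assoc, hV, Matrix.mul_one]
    -- the `i`-th column of `X * V` is `X *ᵥ rightSingularVector M i`
    _ = ∑ i, (X *ᵥ rightSingularVector M i) ⬝ᵥ (A *ᵥ rightSingularVector M i) := rfl

def IsContraction (X : Matrix α β ℝ) : Prop :=
  ∀ w, (X *ᵥ w) ⬝ᵥ (X *ᵥ w) ≤ w ⬝ᵥ w

theorem trace_transpose_mul_le_nuclearNorm {X : Matrix α β ℝ} (hX : IsContraction X)
    (A : Matrix α β ℝ) : (Xᵀ * A).trace ≤ nuclearNorm A := by
  rw [trace_transpose_mul_eq_sum_dotProduct A, nuclearNorm_eq_sum_singularValue]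
  refine sum_le_sum fun i _ => ?_
  set v := rightSingularVector A i
  calc (X *ᵥ v) ⬝ᵥ (A *ᵥ v) ≤ √((X *ᵥ v) ⬝ᵥ (X *ᵥ v)) * √((A *ᵥ v) ⬝ᵥ (A *ᵥ v)) :=
        dotProduct_le_sqrt_mul_sqrt _ _
    _ ≤ √(v ⬝ᵥ v) * singularValue A i := by
        rw [mulVec_rightSingularVector_dotProduct, if_pos rfl,
          Real.sqrt_sq (singularValue_nonneg A i)]
        exact mul_le_mul_of_nonneg_right (Real.sqrt_le_sqrt (hX v)) (singularValue_nonneg A i)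
    _ = singularValue A i := by
        rw [rightSingularVector_dotProduct, if_pos rfl, Real.sqrt_one, one_mul]

-- Where `singularValue A i = 0` the inverse is the junk value `0`, harmless since then `A v i = 0`.
noncomputable def polarFactor (A : Matrix α β ℝ) : Matrix α β ℝ :=
  ∑ i, vecMulVec ((singularValue A i)⁻¹ • (A *ᵥ rightSingularVector A i))
    (rightSingularVector A i)

theorem polarFactor_mulVec (A : Matrix α β ℝ) (w : β → ℝ) :
    polarFactor A *ᵥ w =
      ∑ i, ((rightSingularVector A i ⬝ᵥ w) * (singularValue A i)⁻¹) •
        (A *ᵥ rightSingularVector A i) := by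
  simp only [polarFactor, sum_mulVec, vecMulVec_mulVec, op_smul_eq_smul, smul_smul]

theorem trace_transpose_polarFactor_mul (A : Matrix α β ℝ) :
    ((polarFactor A)ᵀ * A).trace = nuclearNorm A := by
  rw [trace_transpose_mul_eq_sum_dotProduct A, nuclearNorm_eq_sum_singularValue]
  refine sum_congr rfl fun i _ => ?_
  simp only [polarFactor_mulVec, rightSingularVector_dotProduct, ite_mul, one_mul, zero_mul,
    ite_smul, zero_smul, sum_ite_eq', mem_univ, if_true, smul_dotProduct,
    mulVec_rightSingularVector_dotProduct, smul_eq_mul]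
  rw [sq, ← mul_assoc, inv_mul_mul_self]

theorem isContraction_polarFactor (A : Matrix α β ℝ) : IsContraction (polarFactor A) := by
  intro w
  calc polarFactor A *ᵥ w ⬝ᵥ polarFactor A *ᵥ w
      = ∑ i, (rightSingularVector A i ⬝ᵥ w) ^ 2 *
          ((singularValue A i)⁻¹ * singularValue A i) ^ 2 := by
        simp only [polarFactor_mulVec, sum_dotProduct, dotProduct_sum, smul_dotProduct,
          dotProduct_smul, mulVec_rightSingularVector_dotProduct, smul_eq_mul, mul_ite, mul_zero,
          sum_ite_eq', mem_univ, if_true]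
        refine sum_congr rfl fun i _ => by ring
    _ ≤ ∑ i, (rightSingularVector A i ⬝ᵥ w) ^ 2 := by
        refine sum_le_sum fun i _ => mul_le_of_le_one_right (sq_nonneg _) ?_
        rcases eq_or_ne (singularValue A i) 0 with h | h <;> simp [h]
    _ = w ⬝ᵥ w := sum_sq_rightSingularVector_dotProduct A w

theorem nuclearNorm_add_le (A E : Matrix α β ℝ) :
    nuclearNorm (A + E) ≤ nuclearNorm A + nuclearNorm E := by
  have hX := isContraction_polarFactor (A + E)
  calc nuclearNorm (A + E) = ((polarFactor (A + E))ᵀ * (A + E)).trace :=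
        (trace_transpose_polarFactor_mul _).symm
    _ = ((polarFactor (A + E))ᵀ * A).trace + ((polarFactor (A + E))ᵀ * E).trace := by
        rw [Matrix.mul_add, trace_add]
    _ ≤ nuclearNorm A + nuclearNorm E :=
        add_le_add (trace_transpose_mul_le_nuclearNorm hX A)
          (trace_transpose_mul_le_nuclearNorm hX E)

theorem nuclearNorm_neg (A : Matrix α β ℝ) : nuclearNorm (-A) = nuclearNorm A := by
  rw [nuclearNorm, nuclearNorm,
    ((isHermitian_conjTranspose_mul_self (-A)).eigenvalues_eq_eigenvalues_iff
      (isHermitian_conjTranspose_mul_self A)).mpr (by simp)]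

theorem abs_nuclearNorm_add_sub_le (A E : Matrix α β ℝ) :
    |nuclearNorm (A + E) - nuclearNorm A| ≤ nuclearNorm E := by
  have h := nuclearNorm_add_le (A + E) (-E)
  rw [add_neg_cancel_right, nuclearNorm_neg] at h
  rw [abs_sub_le_iff]
  constructor <;> linarith [nuclearNorm_add_le A E]

theorem sum_sq_singularValue (M : Matrix α β ℝ) :
    ∑ i, singularValue M i ^ 2 = frobeniusNorm M ^ 2 := by
  have h := trace_transpose_mul_eq_sum_dotProduct M M M
  simp only [mulVec_rightSingularVector_dotProduct, if_true] at h
  rw [← h, frobeniusNorm, Real.sq_sqrt (by positivity), trace, sum_comm]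
  simp [mul_apply, sq]

theorem card_singularValue_ne_zero (M : Matrix α β ℝ) :
    #{i | singularValue M i ≠ 0} = M.rank := by
  rw [← Fintype.card_subtype, ← rank_conjTranspose_mul_self,
    (isHermitian_conjTranspose_mul_self M).rank_eq_card_non_zero_eigs]
  exact Fintype.card_congr <| Equiv.subtypeEquivRight fun i => by
    rw [← sq_singularValue, pow_ne_zero_iff two_ne_zero]

theorem nuclearNorm_le_sqrt_rank_mul_frobeniusNorm (M : Matrix α β ℝ) :
    nuclearNorm M ≤ √M.rank * frobeniusNorm M := by
  set s : Finset β := {i | singularValue M i ≠ 0}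
  have hsq : (∑ i ∈ s, singularValue M i) ^ 2 ≤ M.rank * frobeniusNorm M ^ 2 :=
    calc (∑ i ∈ s, singularValue M i) ^ 2 ≤ #s * ∑ i ∈ s, singularValue M i ^ 2 :=
          sq_sum_le_card_mul_sum_sq
      _ ≤ M.rank * ∑ i, singularValue M i ^ 2 := by
          rw [card_singularValue_ne_zero]
          gcongr
          exact subset_univ s
      _ = M.rank * frobeniusNorm M ^ 2 := by rw [sum_sq_singularValue]
  rw [nuclearNorm_eq_sum_singularValue, ← sum_filter_ne_zero,
    ← Real.sqrt_sq (frobeniusNorm_nonneg M), ← Real.sqrt_mul (Nat.cast_nonneg _)]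
  exact Real.le_sqrt_of_sq_le hsq

end NuclearNorm

section Unfolding

theorem colStochastic.sum_sq_le_one {α β : Type*} [Fintype α] {P : Matrix α β ℝ}
    (hP : colStochastic P) (j : β) : ∑ i, P i j ^ 2 ≤ 1 :=
  calc ∑ i, P i j ^ 2 ≤ ∑ i, P i j * ∑ i', P i' j := by
        gcongr with i
        rw [sq]
        exact mul_le_mul_of_nonneg_left
          (single_le_sum (fun i' _ => hP.1 i' j) (mem_univ i)) (hP.1 i j)
    _ = 1 := by rw [← sum_mul, hP.2 j, one_mul]

theorem colStochastic.kronecker {α β γ δ : Type*} [Fintype α] [Fintype γ]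
    {P : Matrix α β ℝ} {Q : Matrix γ δ ℝ} (hP : colStochastic P) (hQ : colStochastic Q) :
    colStochastic (kronecker P Q) :=
  ⟨fun _ _ => mul_nonneg (hP.1 _ _) (hQ.1 _ _), fun j => by
    simp [Fintype.sum_prod_type, ← mul_sum, hP.2, hQ.2]⟩

theorem frobeniusNorm_mul_diagonal_mul_transpose_le {α β ι : Type*} [Fintype α] [Fintype β]
    [Fintype ι] [DecidableEq ι] {F : Matrix α ι ℝ} {G : Matrix β ι ℝ}
    (hF : ∀ i, ∑ a, F a i ^ 2 ≤ 1) (hG : ∀ i, ∑ b, G b i ^ 2 ≤ 1) (d : ι → ℝ) :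
    frobeniusNorm (F * diagonal d * Gᵀ) ≤ √(Fintype.card ι) * √(∑ i, d i ^ 2) := by
  rw [frobeniusNorm, ← Real.sqrt_mul (Nat.cast_nonneg _), mul_comm]
  gcongr
  calc ∑ a, ∑ b, (F * diagonal d * Gᵀ) a b ^ 2
      = ∑ a, ∑ b, (∑ i, d i * (F a i * G b i)) ^ 2 := by
        simp only [mul_apply (M := F * diagonal d), mul_diagonal, transpose_apply]
        exact sum_congr rfl fun a _ => sum_congr rfl fun b _ => by
          congr 1; exact sum_congr rfl fun i _ => by ring
    _ ≤ ∑ a, ∑ b, (∑ i, d i ^ 2) * ∑ i, (F a i * G b i) ^ 2 := by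
        gcongr with a _ b _
        exact sum_mul_sq_le_sq_mul_sq _ _ _
    _ = (∑ i, d i ^ 2) * ∑ i, (∑ a, F a i ^ 2) * ∑ b, G b i ^ 2 := by
        have hcol : ∀ i, (∑ a, F a i ^ 2) * ∑ b, G b i ^ 2 = ∑ a, ∑ b, (F a i * G b i) ^ 2 :=
          fun i => by simp only [sum_mul_sum, mul_pow]
        simp only [hcol, ← mul_sum]
        exact congrArg _ ((sum_congr rfl fun a _ => sum_comm).trans sum_comm)
    _ ≤ (∑ i, d i ^ 2) * ∑ _i : ι, 1 := by
        gcongr with i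
        exact mul_le_one₀ (hF i) (sum_nonneg fun b _ => sq_nonneg _) (hG i)
    _ = (∑ i, d i ^ 2) * Fintype.card ι := by simp

variable {n k : ℕ} (P1 P2 P3 P4 : Matrix (Fin n) (Fin k) ℝ)

theorem unfoldB_eq_kronecker_mul_diagonal_mul (M : Matrix (Fin k) (Fin k) ℝ) :
    unfoldB P1 P2 P3 P4 M =
      kronecker P1 P3 * diagonal (fun p : Fin k × Fin k => M p.1 p.2) * (kronecker P2 P4)ᵀ := by
  ext ⟨x1, x3⟩ ⟨x2, x4⟩
  rw [mul_apply]
  simp only [unfoldB, of_apply, mul_diagonal, transpose_apply, kronecker, kronecker_apply,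
    Fintype.sum_prod_type]
  exact sum_congr rfl fun h _ => sum_congr rfl fun g _ => by ring

theorem unfoldC_eq_unfoldB (M : Matrix (Fin k) (Fin k) ℝ) :
    unfoldC P1 P2 P3 P4 M = unfoldB P1 P2 P4 P3 M := by
  ext r c
  simp only [unfoldC, unfoldB, of_apply]
  exact sum_congr rfl fun h _ => sum_congr rfl fun g _ => by ring

theorem unfoldB_add (A E : Matrix (Fin k) (Fin k) ℝ) :
    unfoldB P1 P2 P3 P4 (A + E) = unfoldB P1 P2 P3 P4 A + unfoldB P1 P2 P3 P4 E := by
  simp only [unfoldB_eq_kronecker_mul_diagonal_mul, ← Matrix.mul_add, ← Matrix.add_mul,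
    diagonal_add]
  rfl

theorem rank_unfoldB_le (M : Matrix (Fin k) (Fin k) ℝ) :
    (unfoldB P1 P2 P3 P4 M).rank ≤ k ^ 2 := by
  rw [unfoldB_eq_kronecker_mul_diagonal_mul]
  calc _ ≤ (kronecker P1 P3 * diagonal (fun p : Fin k × Fin k => M p.1 p.2)).rank :=
        rank_mul_le_left _ _
    _ ≤ Fintype.card (Fin k × Fin k) := rank_le_card_width _
    _ = k ^ 2 := by simp [sq]

variable {P1 P2 P3 P4}

theorem frobeniusNorm_unfoldB_le (h1 : colStochastic P1) (h2 : colStochastic P2)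
    (h3 : colStochastic P3) (h4 : colStochastic P4) (M : Matrix (Fin k) (Fin k) ℝ) :
    frobeniusNorm (unfoldB P1 P2 P3 P4 M) ≤ k * frobeniusNorm M := by
  rw [unfoldB_eq_kronecker_mul_diagonal_mul]
  refine (frobeniusNorm_mul_diagonal_mul_transpose_le (h1.kronecker h3).sum_sq_le_one
    (h2.kronecker h4).sum_sq_le_one _).trans_eq ?_
  simp only [frobeniusNorm, Fintype.card_prod, Fintype.card_fin, Nat.cast_mul,
    Real.sqrt_mul_self (Nat.cast_nonneg k), Fintype.sum_prod_type]

theorem nuclearNorm_unfoldB_le (h1 : colStochastic P1) (h2 : colStochastic P2)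
    (h3 : colStochastic P3) (h4 : colStochastic P4) (M : Matrix (Fin k) (Fin k) ℝ) :
    nuclearNorm (unfoldB P1 P2 P3 P4 M) ≤ k ^ 2 * frobeniusNorm M :=
  calc nuclearNorm (unfoldB P1 P2 P3 P4 M)
      ≤ √(unfoldB P1 P2 P3 P4 M).rank * frobeniusNorm (unfoldB P1 P2 P3 P4 M) :=
        nuclearNorm_le_sqrt_rank_mul_frobeniusNorm _
    _ ≤ √((k : ℝ) ^ 2) * (k * frobeniusNorm M) := by
        refine mul_le_mul ?_ (frobeniusNorm_unfoldB_le h1 h2 h3 h4 M)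
          (frobeniusNorm_nonneg _) (Real.sqrt_nonneg _)
        exact Real.sqrt_le_sqrt (by exact_mod_cast rank_unfoldB_le P1 P2 P3 P4 M)
    _ = k ^ 2 * frobeniusNorm M := by
        rw [Real.sqrt_sq (Nat.cast_nonneg k)]
        ring

theorem abs_nuclearNorm_unfoldB_add_sub_le (h1 : colStochastic P1) (h2 : colStochastic P2)
    (h3 : colStochastic P3) (h4 : colStochastic P4) (A E : Matrix (Fin k) (Fin k) ℝ) :
    |nuclearNorm (unfoldB P1 P2 P3 P4 (A + E)) - nuclearNorm (unfoldB P1 P2 P3 P4 A)| ≤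
      k ^ 2 * frobeniusNorm E := by
  rw [unfoldB_add]
  exact (abs_nuclearNorm_add_sub_le _ _).trans (nuclearNorm_unfoldB_le h1 h2 h3 h4 E)

end Unfolding

theorem nuclearNorm_unfoldB_C_perturbation_general (n k : ℕ)
    (P1 P2 P3 P4 : Matrix (Fin n) (Fin k) ℝ)
    (h1 : colStochastic P1) (h2 : colStochastic P2)
    (h3 : colStochastic P3) (h4 : colStochastic P4)
    (p q : Fin k → ℝ) (Δ : Matrix (Fin k) (Fin k) ℝ) :
    |nuclearNorm (unfoldB P1 P2 P3 P4 (Matrix.vecMulVec p q + Δ)) -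
        nuclearNorm (unfoldB P1 P2 P3 P4 (Matrix.vecMulVec p q))| ≤
      (k : ℝ) ^ 2 * frobeniusNorm Δ ∧
    |nuclearNorm (unfoldC P1 P2 P3 P4 (Matrix.vecMulVec p q + Δ)) -
        nuclearNorm (unfoldC P1 P2 P3 P4 (Matrix.vecMulVec p q))| ≤
      (k : ℝ) ^ 2 * frobeniusNorm Δ := by
  refine ⟨abs_nuclearNorm_unfoldB_add_sub_le h1 h2 h3 h4 _ Δ, ?_⟩
  simpa only [unfoldC_eq_unfoldB] using abs_nuclearNorm_unfoldB_add_sub_le h1 h2 h4 h3 _ Δ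

/-- Perturbation bounds for the unfoldings `B` and `C`:
`| ‖B‖* − ‖B_⊥‖* | ≤ k² ‖Δ‖_F` and `| ‖C‖* − ‖C_⊥‖* | ≤ k² ‖Δ‖_F`. -/
theorem nuclearNorm_unfoldB_C_perturbation (n k : ℕ) (hn : 0 < n) (hk : 0 < k)
    (P1 P2 P3 P4 : Matrix (Fin n) (Fin k) ℝ)
    (h1 : colStochastic P1) (h2 : colStochastic P2)
    (h3 : colStochastic P3) (h4 : colStochastic P4)
    (p q : Fin k → ℝ) (Δ : Matrix (Fin k) (Fin k) ℝ) :
    |nuclearNorm (unfoldB P1 P2 P3 P4 (Matrix.vecMulVec p q + Δ)) -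
        nuclearNorm (unfoldB P1 P2 P3 P4 (Matrix.vecMulVec p q))| ≤
      (k : ℝ) ^ 2 * frobeniusNorm Δ ∧
    |nuclearNorm (unfoldC P1 P2 P3 P4 (Matrix.vecMulVec p q + Δ)) -
        nuclearNorm (unfoldC P1 P2 P3 P4 (Matrix.vecMulVec p q))| ≤
      (k : ℝ) ^ 2 * frobeniusNorm Δ :=
  nuclearNorm_unfoldB_C_perturbation_general n k P1 P2 P3 P4 h1 h2 h3 h4 p q Δ
end

section
/- For any real m×p matrix X and real p×n matrix Y, the nuclear norm of their product is bounded by the product of their Frobenius norms: ‖X Y‖* ≤ ‖X‖_F · ‖Y‖_F. -/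
/-!
Let `vᵢ` be an orthonormal eigenbasis of `MᵀM` for `M = XY`, with eigenvalues `σᵢ²`. The vectors
`Mvᵢ` are orthogonal of length `σᵢ`, so normalising them gives an orthogonal family `uᵢ` with
`σᵢ = ⟨uᵢ, XYvᵢ⟩ = ⟨Xᵀuᵢ, Yvᵢ⟩`. Cauchy–Schwarz bounds `∑ σᵢ` by
`(∑ |Xᵀuᵢ|²)^½ (∑ |Yvᵢ|²)^½`, and Bessel's inequality applied to each row of `Xᵀ` and of `Y`
bounds these two sums by `‖X‖_F²` and `‖Y‖_F²`.
-/

open Matrix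

section OrderedRing

variable {R ι κ β : Type*} [CommRing R] [LinearOrder R] [IsStrictOrderedRing R]
  [Fintype ι] [Fintype κ] [Fintype β]

theorem dotProduct_self_nonneg (w : κ → R) : 0 ≤ w ⬝ᵥ w :=
  Fintype.sum_nonneg fun k => mul_self_nonneg (w k)

theorem sum_sq_dotProduct_le_dotProduct_self {u : ι → κ → R}
    (hu_orth : Pairwise fun i j => u i ⬝ᵥ u j = 0) (hu_le : ∀ i, u i ⬝ᵥ u i ≤ 1) (w : κ → R) :
    ∑ i, (u i ⬝ᵥ w) ^ 2 ≤ w ⬝ᵥ w := by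
  set c : ι → R := fun i => u i ⬝ᵥ w
  set s : κ → R := ∑ i, c i • u i
  have hsw : s ⬝ᵥ w = ∑ i, c i ^ 2 := by
    simp only [s, sum_dotProduct, smul_dotProduct, smul_eq_mul, sq, c]
  have hss : s ⬝ᵥ s ≤ ∑ i, c i ^ 2 := by
    have h_diag : s ⬝ᵥ s = ∑ i, c i ^ 2 * (u i ⬝ᵥ u i) := by
      simp only [s, sum_dotProduct, dotProduct_sum, smul_dotProduct, dotProduct_smul, smul_eq_mul]
      refine Finset.sum_congr rfl fun i _ => ?_
      rw [Fintype.sum_eq_single i fun j hji => by simp only [hu_orth hji, mul_zero]]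
      ring
    rw [h_diag]
    exact Finset.sum_le_sum fun i _ => mul_le_of_le_one_right (sq_nonneg _) (hu_le i)
  have h_exp : (w - s) ⬝ᵥ (w - s) = w ⬝ᵥ w - 2 * (s ⬝ᵥ w) + s ⬝ᵥ s := by
    simp only [sub_dotProduct, dotProduct_sub, dotProduct_comm w s]
    ring
  linarith [dotProduct_self_nonneg (w - s)]

theorem sum_mulVec_dotProduct_self_le {u : ι → β → R}
    (hu_orth : Pairwise fun i j => u i ⬝ᵥ u j = 0) (hu_le : ∀ i, u i ⬝ᵥ u i ≤ 1)
    (A : Matrix κ β R) :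
    ∑ i, (A *ᵥ u i) ⬝ᵥ (A *ᵥ u i) ≤ ∑ k, ∑ j, A k j ^ 2 :=
  calc ∑ i, (A *ᵥ u i) ⬝ᵥ (A *ᵥ u i) = ∑ k, ∑ i, (u i ⬝ᵥ A k) ^ 2 := by
        simp only [dotProduct_comm (u _), sq]
        exact Finset.sum_comm
    _ ≤ ∑ k, A k ⬝ᵥ A k :=
        Finset.sum_le_sum fun k _ => sum_sq_dotProduct_le_dotProduct_self hu_orth hu_le (A k)
    _ = ∑ k, ∑ j, A k j ^ 2 := by simp only [dotProduct, sq]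

end OrderedRing

theorem mulVec_dotProduct_mulVec {R α β : Type*} [CommSemiring R] [Fintype α] [Fintype β]
    (M : Matrix α β R) (x y : β → R) : (M *ᵥ x) ⬝ᵥ (M *ᵥ y) = x ⬝ᵥ ((Mᵀ * M) *ᵥ y) := by
  rw [← mulVec_mulVec, dotProduct_mulVec x, vecMul_transpose]

theorem sum_dotProduct_le_sqrt_mul_sqrt {ι κ : Type*} [Fintype ι] [Fintype κ]
    (a b : ι → κ → ℝ) :
    ∑ i, a i ⬝ᵥ b i ≤ √(∑ i, a i ⬝ᵥ a i) * √(∑ i, b i ⬝ᵥ b i) := by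
  simpa only [dotProduct, ← Fintype.sum_prod_type', sq] using
    Real.sum_mul_le_sqrt_mul_sqrt Finset.univ (fun p : ι × κ => a p.1 p.2) (fun p => b p.1 p.2)

theorem frobeniusNorm_transpose {α β : Type*} [Fintype α] [Fintype β] (M : Matrix α β ℝ) :
    frobeniusNorm Mᵀ = frobeniusNorm M := by
  rw [frobeniusNorm, frobeniusNorm, Finset.sum_comm]
  rfl

theorem sqrt_sum_mulVec_dotProduct_self_le_frobeniusNorm {ι α β : Type*} [Fintype ι]
    [Fintype α] [Fintype β] {u : ι → β → ℝ} (hu_orth : Pairwise fun i j => u i ⬝ᵥ u j = 0)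
    (hu_le : ∀ i, u i ⬝ᵥ u i ≤ 1) (A : Matrix α β ℝ) :
    √(∑ i, (A *ᵥ u i) ⬝ᵥ (A *ᵥ u i)) ≤ frobeniusNorm A :=
  Real.sqrt_le_sqrt (sum_mulVec_dotProduct_self_le hu_orth hu_le A)

section Normalize

variable {κ : Type*} [Fintype κ] (w : κ → ℝ)

theorem inv_sqrt_smul_dotProduct_self : ((√(w ⬝ᵥ w))⁻¹ • w) ⬝ᵥ w = √(w ⬝ᵥ w) := by
  have h_sq := Real.mul_self_sqrt (dotProduct_self_nonneg w)
  set s := √(w ⬝ᵥ w)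
  rw [smul_dotProduct, smul_eq_mul, ← h_sq, ← mul_assoc, inv_mul_mul_self]

theorem inv_sqrt_smul_dotProduct_inv_sqrt_smul_le_one :
    ((√(w ⬝ᵥ w))⁻¹ • w) ⬝ᵥ ((√(w ⬝ᵥ w))⁻¹ • w) ≤ 1 := by
  rw [dotProduct_smul, dotProduct_comm, inv_sqrt_smul_dotProduct_self, smul_eq_mul]
  exact inv_mul_le_one_of_le₀ le_rfl (Real.sqrt_nonneg _)

end Normalize

namespace Matrix.IsHermitian

variable {n : Type*} [Fintype n] [DecidableEq n] {A : Matrix n n ℝ} (hA : A.IsHermitian)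

theorem eigenvectorBasis_dotProduct (i j : n) :
    ⇑(hA.eigenvectorBasis i) ⬝ᵥ ⇑(hA.eigenvectorBasis j) = if i = j then 1 else 0 := by
  simpa only [EuclideanSpace.inner_eq_star_dotProduct, star_trivial, dotProduct_comm] using
    orthonormal_iff_ite.mp hA.eigenvectorBasis.orthonormal i j

theorem eigenvectorBasis_dotProduct_mulVec (i j : n) :
    ⇑(hA.eigenvectorBasis i) ⬝ᵥ (A *ᵥ ⇑(hA.eigenvectorBasis j)) =
      if i = j then hA.eigenvalues i else 0 := by
  rw [hA.mulVec_eigenvectorBasis, dotProduct_smul, hA.eigenvectorBasis_dotProduct, smul_eq_mul]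
  split_ifs with h
  · rw [h, mul_one]
  · rw [mul_zero]

end Matrix.IsHermitian

theorem exists_nuclearNorm_eq_sum_dotProduct_mulVec {α β : Type*} [Fintype α] [Fintype β]
    [DecidableEq β] (M : Matrix α β ℝ) :
    ∃ (u : β → α → ℝ) (v : β → β → ℝ),
      (Pairwise fun i j => u i ⬝ᵥ u j = 0) ∧ (∀ i, u i ⬝ᵥ u i ≤ 1) ∧
      (Pairwise fun i j => v i ⬝ᵥ v j = 0) ∧ (∀ i, v i ⬝ᵥ v i ≤ 1) ∧
      nuclearNorm M = ∑ i, u i ⬝ᵥ (M *ᵥ v i) := by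
  set hM := isHermitian_conjTranspose_mul_self M
  set v : β → β → ℝ := fun i => ⇑(hM.eigenvectorBasis i)
  have h_gram (i j : β) : (M *ᵥ v i) ⬝ᵥ (M *ᵥ v j) = if i = j then hM.eigenvalues i else 0 := by
    rw [mulVec_dotProduct_mulVec, ← conjTranspose_eq_transpose_of_trivial]
    exact hM.eigenvectorBasis_dotProduct_mulVec i j
  -- `(√0)⁻¹ = 0`, so `u i = 0` when `M *ᵥ v i = 0`.
  set u : β → α → ℝ := fun i => (√((M *ᵥ v i) ⬝ᵥ (M *ᵥ v i)))⁻¹ • (M *ᵥ v i)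
  refine ⟨u, v, fun i j hij => ?_, fun i => inv_sqrt_smul_dotProduct_inv_sqrt_smul_le_one _,
    fun i j hij => ?_, fun i => ?_, ?_⟩
  · simp only [u, smul_dotProduct, dotProduct_smul, h_gram, if_neg hij, smul_zero]
  · simp only [v, hM.eigenvectorBasis_dotProduct, if_neg hij]
  · simp only [v, hM.eigenvectorBasis_dotProduct, if_pos, le_refl]
  · refine Finset.sum_congr rfl fun i _ => ?_
    rw [inv_sqrt_smul_dotProduct_self, h_gram, if_pos rfl]

/-- The nuclear norm of a product is at most the product of the Frobenius norms. -/
theorem nuclearNorm_mul_le (m p n : ℕ)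
    (X : Matrix (Fin m) (Fin p) ℝ) (Y : Matrix (Fin p) (Fin n) ℝ) :
    nuclearNorm (X * Y) ≤ frobeniusNorm X * frobeniusNorm Y := by
  obtain ⟨u, v, hu_orth, hu_le, hv_orth, hv_le, h_eq⟩ :=
    exists_nuclearNorm_eq_sum_dotProduct_mulVec (X * Y)
  have h_split : ∀ i, u i ⬝ᵥ ((X * Y) *ᵥ v i) = (Xᵀ *ᵥ u i) ⬝ᵥ (Y *ᵥ v i) := fun i => by
    rw [← mulVec_mulVec, dotProduct_mulVec, mulVec_transpose]
  rw [h_eq, ← frobeniusNorm_transpose X]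
  calc ∑ i, u i ⬝ᵥ ((X * Y) *ᵥ v i) = ∑ i, (Xᵀ *ᵥ u i) ⬝ᵥ (Y *ᵥ v i) := by simp only [h_split]
    _ ≤ √(∑ i, (Xᵀ *ᵥ u i) ⬝ᵥ (Xᵀ *ᵥ u i)) * √(∑ i, (Y *ᵥ v i) ⬝ᵥ (Y *ᵥ v i)) :=
        sum_dotProduct_le_sqrt_mul_sqrt _ _
    _ ≤ frobeniusNorm Xᵀ * frobeniusNorm Y :=
        mul_le_mul (sqrt_sum_mulVec_dotProduct_self_le_frobeniusNorm hu_orth hu_le Xᵀ)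
          (sqrt_sum_mulVec_dotProduct_self_le_frobeniusNorm hv_orth hv_le Y)
          (Real.sqrt_nonneg _) (Real.sqrt_nonneg _)
end

section
/- (Perturbation along a path of hidden variables.) Fix positive integers k and m ≥ 1. Let q_0, q_1, …, q_m ∈ ℝ^k, where each intermediate vector q_1, …, q_{m−1} has strictly positive entries summing to 1. Let Δ_1, …, Δ_m be real k×k matrices satisfying Δ_i 𝟙 = 0 and 𝟙ᵀ Δ_i = 0 for every i (where 𝟙 is the all-ones vector). Set B_i := q_{i−1} q_iᵀ + Δ_i. Then B_1 · diag(q_1)^{−1} · B_2 · diag(q_2)^{−1} ⋯ diag(q_{m−1})^{−1} · B_m = q_0 q_mᵀ + Δ_1 · diag(q_1)^{−1} · Δ_2 · diag(q_2)^{−1} ⋯ diag(q_{m−1})^{−1} · Δ_m. -/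
open Matrix

/-- The chain product `M_1 · diag(q_1)⁻¹ · M_2 · diag(q_2)⁻¹ ⋯ diag(q_{m−1})⁻¹ · M_m`. -/
noncomputable def chainProd {k : ℕ} (q : ℕ → Fin k → ℝ)
    (M : ℕ → Matrix (Fin k) (Fin k) ℝ) : ℕ → Matrix (Fin k) (Fin k) ℝ
  | 0 => 1
  | 1 => M 1
  | (i + 2) => chainProd q M (i + 1) * (Matrix.diagonal (q (i + 1)))⁻¹ * M (i + 2)

section aux
variable {k : ℕ}

lemma my_mul_vecMulVec (A : Matrix (Fin k) (Fin k) ℝ) (w x : Fin k → ℝ) :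
    A * vecMulVec w x = vecMulVec (A *ᵥ w) x := by
  ext i j
  simp [Matrix.mul_apply, vecMulVec_apply, mulVec, dotProduct, Finset.sum_mul, mul_assoc]

lemma my_vecMulVec_mul (u v : Fin k → ℝ) (A : Matrix (Fin k) (Fin k) ℝ) :
    vecMulVec u v * A = vecMulVec u (v ᵥ* A) := by
  ext i j
  simp [Matrix.mul_apply, vecMulVec_apply, vecMul, dotProduct, Finset.mul_sum, mul_assoc]

lemma my_vecMulVec_mul_vecMulVec (u v w x : Fin k → ℝ) :
    vecMulVec u v * vecMulVec w x = (v ⬝ᵥ w) • vecMulVec u x := by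
  ext i j
  simp [Matrix.mul_apply, vecMulVec_apply, dotProduct, Finset.sum_mul, Finset.mul_sum]
  congr 1; ext a; ring

lemma my_vecMulVec_zero (u : Fin k → ℝ) : vecMulVec u (0 : Fin k → ℝ) = 0 := by
  ext i j; simp [vecMulVec_apply]

lemma my_zero_vecMulVec (u : Fin k → ℝ) : vecMulVec (0 : Fin k → ℝ) u = 0 := by
  ext i j; simp [vecMulVec_apply]

lemma inv_diag_eq (v : Fin k → ℝ) (hv : ∀ a, v a ≠ 0) :
    (Matrix.diagonal v)⁻¹ = Matrix.diagonal (fun a => (v a)⁻¹) := by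
  apply Matrix.inv_eq_right_inv
  rw [Matrix.diagonal_mul_diagonal]
  have : (fun a => v a * (v a)⁻¹) = fun _ : Fin k => (1:ℝ) :=
    funext fun a => mul_inv_cancel₀ (hv a)
  rw [this, Matrix.diagonal_one]

lemma inv_diag_mulVec (v : Fin k → ℝ) (hv : ∀ a, v a ≠ 0) :
    (Matrix.diagonal v)⁻¹ *ᵥ v = fun _ => (1:ℝ) := by
  rw [inv_diag_eq v hv]
  funext i
  simp [Matrix.mulVec_diagonal, inv_mul_cancel₀ (hv i)]

lemma vecMul_inv_diag (v : Fin k → ℝ) (hv : ∀ a, v a ≠ 0) :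
    v ᵥ* (Matrix.diagonal v)⁻¹ = fun _ => (1:ℝ) := by
  rw [inv_diag_eq v hv]
  funext i
  simp [Matrix.vecMul_diagonal, mul_inv_cancel₀ (hv i)]

lemma chainProd_succ (q : ℕ → Fin k → ℝ) (M : ℕ → Matrix (Fin k) (Fin k) ℝ)
    (n : ℕ) (hn : 1 ≤ n) :
    chainProd q M (n + 1) = chainProd q M n * (Matrix.diagonal (q n))⁻¹ * M (n + 1) := by
  obtain ⟨j, rfl⟩ := Nat.exists_eq_add_of_le' hn
  rfl

lemma chainProd_mulVec_one (q : ℕ → Fin k → ℝ) (Δ : ℕ → Matrix (Fin k) (Fin k) ℝ)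
    (n : ℕ) (hn : 1 ≤ n) (h : (Δ n) *ᵥ (fun _ => (1 : ℝ)) = 0) :
    chainProd q Δ n *ᵥ (fun _ => (1 : ℝ)) = 0 := by
  match n, hn with
  | 1, _ => exact h
  | (i + 2), _ =>
    show (chainProd q Δ (i + 1) * (Matrix.diagonal (q (i + 1)))⁻¹ * Δ (i + 2)) *ᵥ _ = 0
    rw [← Matrix.mulVec_mulVec, h, Matrix.mulVec_zero]

end aux

/-- Perturbation along a path of hidden variables:
`B_1 diag(q_1)⁻¹ B_2 ⋯ diag(q_{m−1})⁻¹ B_m = q_0 q_mᵀ + Δ_1 diag(q_1)⁻¹ Δ_2 ⋯ diag(q_{m−1})⁻¹ Δ_m`. -/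
theorem path_perturbation (k m : ℕ) (hk : 0 < k) (hm : 1 ≤ m)
    (q : ℕ → Fin k → ℝ)
    (hq : ∀ i, 1 ≤ i → i ≤ m - 1 → (∀ a, 0 < q i a) ∧ (∑ a, q i a) = 1)
    (Δ : ℕ → Matrix (Fin k) (Fin k) ℝ)
    (hΔrow : ∀ i, 1 ≤ i → i ≤ m → (Δ i) *ᵥ (fun _ => (1 : ℝ)) = 0)
    (hΔcol : ∀ i, 1 ≤ i → i ≤ m → (fun _ => (1 : ℝ)) ᵥ* (Δ i) = 0)
    (B : ℕ → Matrix (Fin k) (Fin k) ℝ)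
    (hB : ∀ i, 1 ≤ i → i ≤ m → B i = Matrix.vecMulVec (q (i - 1)) (q i) + Δ i) :
    chainProd q B m = Matrix.vecMulVec (q 0) (q m) + chainProd q Δ m := by
  have key : ∀ n, 1 ≤ n → n ≤ m →
      chainProd q B n = Matrix.vecMulVec (q 0) (q n) + chainProd q Δ n := by
    intro n hn
    induction n, hn using Nat.le_induction with
    | base =>
      intro h1
      show B 1 = _
      rw [hB 1 le_rfl h1]
      rfl
    | succ n hn IH =>
      intro hsm
      have hnm : n ≤ m := le_trans (Nat.le_succ n) hsm
      have hn1 : n ≤ m - 1 := by omega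
      obtain ⟨hpos, hsum⟩ := hq n hn hn1
      have hne : ∀ a, q n a ≠ 0 := fun a => ne_of_gt (hpos a)
      rw [chainProd_succ q B n hn, IH hnm, hB (n + 1) (by omega) hsm,
        chainProd_succ q Δ n hn]
      have hs1 : Nat.succ n - 1 = n := rfl
      rw [add_mul, add_mul, mul_add, mul_add]
      have hT1 : vecMulVec (q 0) (q n) * (Matrix.diagonal (q n))⁻¹ *
          vecMulVec (q (n + 1 - 1)) (q (n + 1)) = vecMulVec (q 0) (q (n + 1)) := by
        rw [my_vecMulVec_mul, vecMul_inv_diag (q n) hne, my_vecMulVec_mul_vecMulVec]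
        have : (fun _ : Fin k => (1:ℝ)) ⬝ᵥ (q (n + 1 - 1)) = 1 := by
          simpa [dotProduct] using hsum
        rw [this, one_smul]
      have hT2 : vecMulVec (q 0) (q n) * (Matrix.diagonal (q n))⁻¹ * Δ (n + 1) = 0 := by
        rw [my_vecMulVec_mul, vecMul_inv_diag (q n) hne, my_vecMulVec_mul,
          hΔcol (n + 1) (by omega) hsm, my_vecMulVec_zero]
      have hT3 : chainProd q Δ n * (Matrix.diagonal (q n))⁻¹ *
          vecMulVec (q (n + 1 - 1)) (q (n + 1)) = 0 := by
        rw [my_mul_vecMulVec, ← Matrix.mulVec_mulVec]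
        have : (Matrix.diagonal (q n))⁻¹ *ᵥ (q (n + 1 - 1)) = fun _ => (1:ℝ) :=
          inv_diag_mulVec (q n) hne
        rw [this, chainProd_mulVec_one q Δ n hn (hΔrow n hn hnm), my_zero_vecMulVec]
      rw [hT1, hT2, hT3]
      abel
  exact key m hm le_rfl
end
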